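/- arXiv:2605.17529 — 4 statements merged into one kernel-verified Lean document; each statement's English description precedes it below -/
import Mathlib

section
/- Let u₁,…,u_k : ℕ → ℤ, let θ₁,…,θ_k ∈ ℝ, and let P be a real polynomial. Set D = sup_{n ∈ ℕ} |Σ_{i=1}^k θ_i u_i(n) − P(n)|, and assume D < ∞. Let β, η > 0 satisfy β·D < η. Then there exists a set E ⊆ ℕ whose natural density exists and is positive, such that R_{u₁}(E) ∩ ⋯ ∩ R_{u_k}(E) ⊆ {n ∈ ℕ : ‖β·P(n)‖ < η}. -/
open Filter

/-- Distance from a real number to the nearest integer. -/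
noncomputable def distNearestInt (x : ℝ) : ℝ := |x - round x|

/-- A set of naturals is thick if it contains arbitrarily long blocks of
consecutive integers. -/
def Thick (S : Set ℕ) : Prop := ∀ L : ℕ, ∃ N : ℕ, ∀ j : ℕ, j ≤ L → N + j ∈ S

/-- A set of naturals is syndetic if it has bounded gaps. -/
def Syndetic (S : Set ℕ) : Prop :=
  ∃ G : ℕ, 0 < G ∧ ∀ a : ℕ, ∃ n ∈ S, a ≤ n ∧ n < a + G

/-- A set is piecewise syndetic if it is the intersection of a thick set and a
syndetic set. -/
def PiecewiseSyndetic (S : Set ℕ) : Prop :=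
  ∃ T B : Set ℕ, Thick T ∧ Syndetic B ∧ S = T ∩ B

open Classical in
/-- The number of elements of `E ∩ {1, …, N}`. -/
noncomputable def countIn (E : Set ℕ) (N : ℕ) : ℕ :=
  ((Finset.Icc 1 N).filter (fun n => n ∈ E)).card

/-- `E` has a natural density that exists and is positive. -/
def PosDensity (E : Set ℕ) : Prop :=
  ∃ d : ℝ, 0 < d ∧
    Tendsto (fun N : ℕ => (countIn E N : ℝ) / (N : ℝ)) atTop (nhds d)

/-- The return-time set `R_u(E) = {n : ∃ m ∈ E, m + u n ∈ E}`. -/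
def retSet (u : ℕ → ℤ) (E : Set ℕ) : Set ℕ :=
  {n : ℕ | ∃ m m' : ℕ, m ∈ E ∧ m' ∈ E ∧ (m' : ℤ) = (m : ℤ) + u n}

/-- The return-time set along the floor of a real-valued function. -/
noncomputable def retSetFloor (f : ℝ → ℝ) (E : Set ℕ) : Set ℕ :=
  retSet (fun n => ⌊f (n : ℝ)⌋) E

/-- The return-time set along the closest integer to a real-valued function. -/
noncomputable def retSetRound (f : ℝ → ℝ) (E : Set ℕ) : Set ℕ :=
  retSet (fun n => round (f (n : ℝ))) E

/-!
Put `x = (βθ₁, …, βθ_k)` in the torus `𝕋ᵏ`. By compactness of `𝕋ᵏ` the Bohr set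
`{m : ‖m • x‖ < ε / 2}` is syndetic, so choosing one of its elements in each block
`[tG, (t + 1)G)` yields a set `E` of density `1 / G`. Differences of elements of `E` lie in the
Bohr set of radius `ε`, hence `‖βθᵢuᵢ(n)‖ < ε` for every `n ∈ ⋂ᵢ R_{uᵢ}(E)`, and then
`‖βP(n)‖ ≤ ∑ᵢ ‖βθᵢuᵢ(n)‖ + βD ≤ kε + βD < η` for `ε = (η - βD) / (k + 1)`.
-/

open Topology

section CompactGroup

variable {X : Type*} [SeminormedAddCommGroup X] [CompactSpace X]

theorem exists_le_norm_nsmul_lt (x : X) {ε : ℝ} (hε : 0 < ε) (M : ℕ) :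
    ∃ d, M ≤ d ∧ ‖d • x‖ < ε := by
  obtain ⟨_, φ, hφ, hlim⟩ := CompactSpace.tendsto_subseq fun j : ℕ => (j * M) • x
  obtain ⟨N, hN⟩ := Metric.cauchySeq_iff'.1 hlim.cauchySeq ε hε
  have hlt : φ N < φ (N + 1) := hφ N.lt_succ_self
  refine ⟨(φ (N + 1) - φ N) * M, Nat.le_mul_of_pos_left M (Nat.sub_pos_of_lt hlt), ?_⟩
  have hdist := hN (N + 1) N.le_succ
  simp only [Function.comp_apply, dist_eq_norm] at hdist
  rwa [Nat.sub_mul, sub_nsmul _ (Nat.mul_le_mul_right M hlt.le), ← sub_eq_add_neg]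

theorem syndetic_setOf_norm_nsmul_lt (x : X) {ε : ℝ} (hε : 0 < ε) :
    Syndetic {n : ℕ | ‖n • x‖ < ε} := by
  -- Finitely many orbit points `s • x` are `ε / 2`-dense in the orbit, and each of them is
  -- followed by a return time `d s ≥ s`; the shift `d s - s` then brings `a • x` near `0`.
  have hcover : closure (Set.range fun s : ℕ => s • x) ⊆ ⋃ s : ℕ, Metric.ball (s • x) (ε / 2) :=
    fun y hy => by
      obtain ⟨_, ⟨s, rfl⟩, hs⟩ := Metric.mem_closure_iff.1 hy (ε / 2) (half_pos hε)
      exact Set.mem_iUnion.2 ⟨s, by rwa [Metric.mem_ball]⟩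
  obtain ⟨F, hF⟩ := isClosed_closure.isCompact.elim_finite_subcover _
    (fun _ => Metric.isOpen_ball) hcover
  choose d hsd hd using exists_le_norm_nsmul_lt x (half_pos hε)
  refine ⟨F.sup d + 1, Nat.succ_pos _, fun a => ?_⟩
  obtain ⟨s, hsF, hs⟩ : ∃ s ∈ F, dist (a • x) (s • x) < ε / 2 := by
    simpa using hF (subset_closure ⟨a, rfl⟩)
  refine ⟨a + (d s - s), ?_, Nat.le_add_right _ _, ?_⟩
  · have hsplit : (a + (d s - s)) • x = (a • x - s • x) + d s • x := by
      rw [add_nsmul, sub_nsmul _ (hsd s)]; abel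
    calc ‖(a + (d s - s)) • x‖ ≤ ‖a • x - s • x‖ + ‖d s • x‖ := hsplit ▸ norm_add_le _ _
      _ < ε / 2 + ε / 2 := add_lt_add (by rwa [← dist_eq_norm]) (hd s)
      _ = ε := add_halves ε
  · have := Finset.le_sup (f := d) hsF
    omega

end CompactGroup

theorem tendsto_div_of_abs_sub_mul_le {f : ℕ → ℝ} {c C : ℝ} (h : ∀ N, |f N - c * N| ≤ C) :
    Tendsto (fun N : ℕ => f N / N) atTop (𝓝 c) := by
  have herr : Tendsto (fun N : ℕ => (f N - c * N) / N) atTop (𝓝 0) := by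
    refine squeeze_zero_norm (fun N => ?_) (tendsto_const_div_atTop_nhds_zero_nat C)
    rw [Real.norm_eq_abs, abs_div, Nat.abs_cast]
    exact div_le_div_of_nonneg_right (h N) N.cast_nonneg
  refine (add_zero c ▸ herr.const_add c).congr' ?_
  filter_upwards [eventually_ne_atTop 0] with N hN
  field_simp
  ring

section BlockSelection

variable {G : ℕ} {e : ℕ → ℕ} (hle : ∀ t, t * G ≤ e t) (hlt : ∀ t, e t < t * G + G)
include hle hlt

theorem strictMono_of_mem_blocks : StrictMono e :=
  strictMono_nat_of_lt_succ fun t => (hlt t).trans_le (by simpa [add_one_mul] using hle (t + 1))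

theorem countIn_range_le_of_mem_blocks (N : ℕ) : countIn (Set.range e) N ≤ N / G + 1 := by
  classical
  have hdiv : ∀ t, e t / G = t := fun t =>
    Nat.div_eq_of_lt_le (hle t) (by rw [add_one_mul]; exact hlt t)
  calc countIn (Set.range e) N ≤ (Finset.range (N / G + 1)).card := by
        refine Finset.card_le_card_of_injOn (· / G) (fun n hn => ?_) ?_
        · have hnN : n ≤ N := (Finset.mem_Icc.1 (Finset.mem_filter.1 hn).1).2
          exact Finset.mem_range.2 (Nat.lt_succ_of_le (Nat.div_le_div_right hnN))
        · rintro _ hn₁ _ hn₂ (heq : _ / G = _ / G)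
          obtain ⟨t₁, rfl⟩ := (Finset.mem_filter.1 hn₁).2
          obtain ⟨t₂, rfl⟩ := (Finset.mem_filter.1 hn₂).2
          rw [hdiv, hdiv] at heq
          rw [heq]
    _ = N / G + 1 := Finset.card_range _

theorem div_le_countIn_range_of_mem_blocks (N : ℕ) : N / G ≤ countIn (Set.range e) N + 1 := by
  classical
  have hG : 0 < G := by have := hlt 0; omega
  have hcard : N / G - 1 ≤ countIn (Set.range e) N := by
    calc N / G - 1 = (Finset.Ico 1 (N / G)).card := (Nat.card_Ico _ _).symm
      _ ≤ countIn (Set.range e) N := by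
        refine Finset.card_le_card_of_injOn e (fun t ht => ?_)
          (strictMono_of_mem_blocks hle hlt).injective.injOn
        obtain ⟨ht₁, ht₂⟩ := Finset.mem_Ico.1 ht
        have hupper : (t + 1) * G ≤ N :=
          (Nat.mul_le_mul_right G ht₂).trans (Nat.div_mul_le_self N G)
        refine Finset.mem_filter.2 ⟨Finset.mem_Icc.2 ⟨?_, ?_⟩, t, rfl⟩
        · exact (Nat.mul_pos ht₁ hG).trans_le (hle t)
        · rw [add_one_mul] at hupper
          exact ((hlt t).trans_le hupper).le
  omega

theorem posDensity_range_of_mem_blocks : PosDensity (Set.range e) := by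
  have hG : (0 : ℝ) < G := Nat.cast_pos.2 (by have := hlt 0; omega)
  refine ⟨1 / G, by positivity, tendsto_div_of_abs_sub_mul_le (C := 2) fun N => ?_⟩
  have hlow := div_le_countIn_range_of_mem_blocks hle hlt N
  have hup := countIn_range_le_of_mem_blocks hle hlt N
  have hfloor : (N : ℝ) / G - 1 < (N / G : ℕ) := by
    rw [← Nat.floor_div_eq_div (K := ℝ)]; exact Nat.sub_one_lt_floor _
  have hcast : ((N / G : ℕ) : ℝ) ≤ N / G := Nat.cast_div_le
  rw [abs_le, one_div_mul_eq_div]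
  constructor
  · have : ((N / G : ℕ) : ℝ) ≤ countIn (Set.range e) N + 1 := by exact_mod_cast hlow
    linarith
  · have : (countIn (Set.range e) N : ℝ) ≤ (N / G : ℕ) + 1 := by exact_mod_cast hup
    linarith

end BlockSelection

theorem Syndetic.exists_subset_posDensity {S : Set ℕ} (hS : Syndetic S) :
    ∃ E ⊆ S, PosDensity E := by
  obtain ⟨G, -, hS⟩ := hS
  choose e heS hle hlt using fun t => hS (t * G)
  exact ⟨Set.range e, Set.range_subset_iff.2 heS, posDensity_range_of_mem_blocks hle hlt⟩

theorem retSet_subset_setOf_norm_zsmul_lt {X : Type*} [SeminormedAddCommGroup X] {E : Set ℕ}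
    {x : X} {δ : ℝ} (hE : ∀ m ∈ E, ‖m • x‖ < δ) (u : ℕ → ℤ) :
    retSet u E ⊆ {n | ‖u n • x‖ < 2 * δ} := by
  rintro n ⟨m, m', hm, hm', hmm'⟩
  have hu : u n = m' - m := by omega
  calc ‖u n • x‖ = ‖m' • x - m • x‖ := by
        rw [hu, sub_zsmul, natCast_zsmul, natCast_zsmul, sub_eq_add_neg]
    _ ≤ ‖m' • x‖ + ‖m • x‖ := norm_sub_le _ _
    _ < 2 * δ := by linarith [hE m hm, hE m' hm']

theorem distNearestInt_le_sum_add_abs {ι : Type*} (s : Finset ι) (a : ι → ℝ) (y : ℝ) :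
    distNearestInt y ≤ ∑ i ∈ s, ‖(a i : UnitAddCircle)‖ + |y - ∑ i ∈ s, a i| := by
  have hy : (y : UnitAddCircle) =
      ∑ i ∈ s, (a i : UnitAddCircle) + ((y - ∑ i ∈ s, a i : ℝ) : UnitAddCircle) := by
    rw [← QuotientAddGroup.mk_sum, ← AddCircle.coe_add, add_sub_cancel]
  rw [distNearestInt, ← UnitAddCircle.norm_eq, hy]
  exact (norm_add_le _ _).trans (add_le_add (norm_sum_le _ _) QuotientAddGroup.norm_mk_le_norm)

theorem stmt_7_general (k : ℕ) (u : Fin k → ℕ → ℤ) (θ : Fin k → ℝ) (P : Polynomial ℝ)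
    (D : ℝ) (hD : ∀ n : ℕ, |(∑ i, θ i * (u i n : ℝ)) - P.eval (n : ℝ)| ≤ D)
    (β η : ℝ) (hβ : 0 < β) (hβD : β * D < η) :
    ∃ E : Set ℕ, PosDensity E ∧
      (⋂ i, retSet (u i) E) ⊆
        {n : ℕ | distNearestInt (β * P.eval (n : ℝ)) < η} := by
  set ε := (η - β * D) / (k + 1) with hε_def
  have hkε : k * ε + ε = η - β * D := by rw [hε_def]; field_simp
  have hε : 0 < ε := div_pos (by linarith) (by positivity)
  let x : Fin k → UnitAddCircle := fun i => ↑(β * θ i)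
  obtain ⟨E, hEB, hE⟩ := (syndetic_setOf_norm_nsmul_lt x (half_pos hε)).exists_subset_posDensity
  refine ⟨E, hE, fun n hn => ?_⟩
  have hu : ∀ i, ‖((β * (θ i * u i n) : ℝ) : UnitAddCircle)‖ < ε := fun i => by
    have hret : ‖u i n • x‖ < 2 * (ε / 2) :=
      retSet_subset_setOf_norm_zsmul_lt hEB (u i) (Set.mem_iInter.1 hn i)
    calc ‖((β * (θ i * u i n) : ℝ) : UnitAddCircle)‖ = ‖(u i n • x) i‖ := by
          rw [Pi.smul_apply, ← AddCircle.coe_zsmul, zsmul_eq_mul, mul_comm (u i n : ℝ), mul_assoc]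
      _ ≤ ‖u i n • x‖ := norm_le_pi_norm _ i
      _ < ε := by linarith
  calc distNearestInt (β * P.eval (n : ℝ))
      ≤ ∑ i, ‖((β * (θ i * u i n) : ℝ) : UnitAddCircle)‖ +
          |β * P.eval (n : ℝ) - ∑ i, β * (θ i * u i n)| :=
        distNearestInt_le_sum_add_abs _ _ _
    _ ≤ k * ε + β * D := by
        gcongr ?_ + ?_
        · exact (Finset.sum_le_sum fun i _ => (hu i).le).trans_eq (by simp)
        · rw [← Finset.mul_sum, ← mul_sub, abs_mul, abs_of_pos hβ, abs_sub_comm]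
          exact mul_le_mul_of_nonneg_left (hD n) hβ.le
    _ < η := by linarith

/-- Lemma 2.2 (Bohr-set reduction). -/
theorem stmt_7 (k : ℕ) (u : Fin k → ℕ → ℤ) (θ : Fin k → ℝ) (P : Polynomial ℝ)
    (D : ℝ) (hD : ∀ n : ℕ, |(∑ i, θ i * (u i n : ℝ)) - P.eval (n : ℝ)| ≤ D)
    (β η : ℝ) (hβ : 0 < β) (hη : 0 < η) (hβD : β * D < η) :
    ∃ E : Set ℕ, PosDensity E ∧
      (⋂ i, retSet (u i) E) ⊆
        {n : ℕ | distNearestInt (β * P.eval (n : ℝ)) < η} :=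
  stmt_7_general k u θ P D hD β η hβ hβD
end

section
/- Let c₁,…,c_m ∈ ℝ and η > 0. Then the set {n ∈ ℕ : ‖c_j · n^{3/2}‖ < η for all 1 ≤ j ≤ m} is thick. -/
open Filter

/-! For `0 ≤ j ≤ L` and large `t`, `(4t² + j)^{3/2} = 8t³ + 3tj + O(L²/t)`, so
`‖c (4t² + j)^{3/2}‖ ≤ ‖8ct³‖ + L ‖3ct‖ + O(|c| L²/t)` and the block `4t², …, 4t² + L` lies in the
set as soon as all `‖8 c_i t³‖` and `‖3 c_i t‖` are small. Such `t` exist in every multiple of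
a given integer: van der Waerden's theorem, applied to a finite colouring of the orbit
`n ↦ (γ_i n³ / 6, δ_i n)` in a torus, gives a progression `b, b + a, b + 2a, b + 3a` of nearby
points, and the third finite difference of `n³` along it is `6a³`. -/

lemma distNearestInt_eq_norm (x : ℝ) : distNearestInt x = ‖(x : UnitAddCircle)‖ :=
  UnitAddCircle.norm_eq.symm

lemma exists_homothetic_copy_dist_lt {X : Type*} [PseudoMetricSpace X] [CompactSpace X] (x : ℕ → X)
    (S : Finset ℕ) {ε : ℝ} (hε : 0 < ε) :
    ∃ a > 0, ∃ b, ∀ s ∈ S, ∀ s' ∈ S, dist (x (a * s + b)) (x (a * s' + b)) < ε := by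
  obtain ⟨T, -, hTfin, hcover⟩ :=
    finite_cover_balls_of_compact (isCompact_univ (X := X)) (half_pos hε)
  have hcenter : ∀ n, ∃ y ∈ T, x n ∈ Metric.ball y (ε / 2) := fun n => by
    simpa using hcover (Set.mem_univ (x n))
  choose center hcenter_mem hx using hcenter
  have := hTfin.to_subtype
  obtain ⟨a, ha, b, y, hy⟩ := Combinatorics.exists_mono_homothetic_copy S
    fun n => (⟨center n, hcenter_mem n⟩ : T)
  refine ⟨a, ha, b, fun s hs s' hs' => ?_⟩
  have hsame : center (a * s + b) = center (a * s' + b) :=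
    congrArg Subtype.val ((hy s hs).trans (hy s' hs').symm)
  calc dist (x (a * s + b)) (x (a * s' + b))
      ≤ dist (x (a * s + b)) (center (a * s + b)) +
          dist (center (a * s' + b)) (x (a * s' + b)) := by
        rw [hsame]; exact dist_triangle _ _ _
    _ < ε / 2 + ε / 2 := add_lt_add (hx _) (by rw [dist_comm]; exact hx _)
    _ = ε := add_halves ε

lemma exists_pos_norm_cube_lt_and_norm_lt {ι : Type*} [Fintype ι] (γ δ : ι → ℝ) {ε : ℝ}
    (hε : 0 < ε) :
    ∃ a : ℕ, 0 < a ∧ ∀ i, ‖((γ i * a ^ 3 : ℝ) : UnitAddCircle)‖ < ε ∧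
      ‖((δ i * a : ℝ) : UnitAddCircle)‖ < ε := by
  let x : ℕ → (ι → UnitAddCircle) × (ι → UnitAddCircle) := fun n =>
    (fun i => ((γ i / 6 * (n : ℝ) ^ 3 : ℝ) : UnitAddCircle),
      fun i => ((δ i * n : ℝ) : UnitAddCircle))
  obtain ⟨a, ha, b, hab⟩ :=
    exists_homothetic_copy_dist_lt x (Finset.range 4) (by positivity : 0 < ε / 7)
  have hclose : ∀ k < 4, dist (x (a * k + b)) (x (a * 0 + b)) < ε / 7 := fun k hk =>
    hab k (Finset.mem_range.2 hk) 0 (by simp)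
  refine ⟨a, ha, fun i => ⟨?_, ?_⟩⟩
  · set z : ℕ → UnitAddCircle := fun k => (x (a * k + b)).1 i with hz_def
    have hz : ∀ k < 4, ‖z k - z 0‖ < ε / 7 := fun k hk => by
      rw [← dist_eq_norm]
      calc dist (z k) (z 0) ≤ dist (x (a * k + b)).1 (x (a * 0 + b)).1 :=
          dist_le_pi_dist (x (a * k + b)).1 (x (a * 0 + b)).1 i
        _ ≤ dist (x (a * k + b)) (x (a * 0 + b)) := by rw [Prod.dist_eq]; exact le_max_left _ _
        _ < ε / 7 := hclose k hk
    have hdiff : ((γ i * a ^ 3 : ℝ) : UnitAddCircle) =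
        (z 3 - z 0) - 3 • (z 2 - z 0) + 3 • (z 1 - z 0) := by
      simp only [hz_def, x, ← AddCircle.coe_sub, ← AddCircle.coe_nsmul, ← AddCircle.coe_add]
      congr 1
      push_cast
      ring
    calc ‖((γ i * a ^ 3 : ℝ) : UnitAddCircle)‖
        ≤ ‖z 3 - z 0‖ + 3 * ‖z 2 - z 0‖ + 3 * ‖z 1 - z 0‖ := by
          rw [hdiff]
          have h2 : ‖3 • (z 2 - z 0)‖ ≤ 3 * ‖z 2 - z 0‖ := by
            simpa using norm_nsmul_le (n := 3) (a := z 2 - z 0)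
          have h1 : ‖3 • (z 1 - z 0)‖ ≤ 3 * ‖z 1 - z 0‖ := by
            simpa using norm_nsmul_le (n := 3) (a := z 1 - z 0)
          linarith [norm_add_le (z 3 - z 0 - 3 • (z 2 - z 0)) (3 • (z 1 - z 0)),
            norm_sub_le (z 3 - z 0) (3 • (z 2 - z 0))]
      _ < ε / 7 + 3 * (ε / 7) + 3 * (ε / 7) := by gcongr <;> exact hz _ (by norm_num)
      _ = ε := by ring
  · have hlin : ((δ i * a : ℝ) : UnitAddCircle) = (x (a * 1 + b)).2 i - (x (a * 0 + b)).2 i := by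
      simp only [x, ← AddCircle.coe_sub]
      congr 1
      push_cast
      ring
    rw [hlin, ← dist_eq_norm]
    calc dist ((x (a * 1 + b)).2 i) ((x (a * 0 + b)).2 i)
        ≤ dist (x (a * 1 + b)) (x (a * 0 + b)) :=
          (dist_le_pi_dist _ _ i).trans (by rw [Prod.dist_eq]; exact le_max_right _ _)
      _ < ε / 7 := hclose 1 (by norm_num)
      _ < ε := by linarith

lemma frequently_norm_cube_lt_and_norm_lt {ι : Type*} [Fintype ι] (γ δ : ι → ℝ) {ε : ℝ}
    (hε : 0 < ε) :
    ∃ᶠ t : ℕ in atTop, ∀ i, ‖((γ i * t ^ 3 : ℝ) : UnitAddCircle)‖ < ε ∧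
      ‖((δ i * t : ℝ) : UnitAddCircle)‖ < ε := by
  refine frequently_atTop.2 fun N => ?_
  obtain ⟨a, ha, h⟩ := exists_pos_norm_cube_lt_and_norm_lt
    (fun i => γ i * ((N + 1 : ℕ) : ℝ) ^ 3) (fun i => δ i * ((N + 1 : ℕ) : ℝ)) hε
  refine ⟨(N + 1) * a, by nlinarith, fun i => ?_⟩
  push_cast at h ⊢
  simpa only [mul_pow, mul_assoc] using h i

lemma rpow_three_halves_eq_sqrt_pow {x : ℝ} (hx : 0 ≤ x) : x ^ ((3 : ℝ) / 2) = √x ^ 3 := by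
  rw [Real.sqrt_eq_rpow, ← Real.rpow_natCast, ← Real.rpow_mul hx]
  norm_num

lemma abs_rpow_three_halves_sub_le {t : ℝ} (ht : 0 < t) {j : ℝ} (hj : 0 ≤ j) :
    |(4 * t ^ 2 + j) ^ ((3 : ℝ) / 2) - (8 * t ^ 3 + 3 * t * j)| ≤ j ^ 2 / (4 * t) := by
  have hs : √(4 * t ^ 2 + j) ^ 2 = 4 * t ^ 2 + j := Real.sq_sqrt (by positivity)
  set s := √(4 * t ^ 2 + j)
  have hs0 : 0 ≤ s := Real.sqrt_nonneg _
  have herr : s ^ 3 - (8 * t ^ 3 + 3 * t * j) = (s + t) * (s - 2 * t) ^ 2 := by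
    linear_combination (3 * t) * hs
  rw [rpow_three_halves_eq_sqrt_pow (by positivity), herr, abs_of_nonneg (by positivity),
    le_div_iff₀ (by positivity)]
  have : j ^ 2 - (s + t) * (s - 2 * t) ^ 2 * (4 * t) = ((s - 2 * t) * s) ^ 2 := by
    linear_combination (4 * t ^ 2 - s ^ 2 - j) * hs
  nlinarith [sq_nonneg ((s - 2 * t) * s)]

lemma distNearestInt_mul_rpow_three_halves_le (x : ℝ) {t : ℝ} (ht : 0 < t) (j : ℕ) :
    distNearestInt (x * (4 * t ^ 2 + j) ^ ((3 : ℝ) / 2)) ≤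
      ‖((8 * x * t ^ 3 : ℝ) : UnitAddCircle)‖ + j * ‖((3 * x * t : ℝ) : UnitAddCircle)‖ +
        |x| * (j ^ 2 / (4 * t)) := by
  set e := (4 * t ^ 2 + j) ^ ((3 : ℝ) / 2) - (8 * t ^ 3 + 3 * t * j) with he
  have hsplit :
      x * (4 * t ^ 2 + j) ^ ((3 : ℝ) / 2) = 8 * x * t ^ 3 + j • (3 * x * t) + x * e := by
    rw [he, nsmul_eq_mul]
    ring
  rw [distNearestInt_eq_norm, hsplit, AddCircle.coe_add, AddCircle.coe_add, AddCircle.coe_nsmul]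
  refine (norm_add₃_le).trans (add_le_add (add_le_add le_rfl norm_nsmul_le) ?_)
  calc ‖((x * e : ℝ) : UnitAddCircle)‖ ≤ |x * e| := QuotientAddGroup.norm_mk_le_norm
    _ = |x| * |e| := abs_mul x e
    _ ≤ |x| * (j ^ 2 / (4 * t)) :=
      mul_le_mul_of_nonneg_left (abs_rpow_three_halves_sub_le ht j.cast_nonneg) (abs_nonneg x)

/-- Lemma 2.5: the set {n : ‖c_j n^{3/2}‖ < η for all j} is thick. -/
theorem stmt_10 (m : ℕ) (c : Fin m → ℝ) (η : ℝ) (hη : 0 < η) :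
    Thick {n : ℕ | ∀ j : Fin m,
      distNearestInt (c j * (n : ℝ) ^ ((3 : ℝ) / 2)) < η} := by
  intro L
  set ε := η / (3 * (L + 1))
  have hεL : (L + 1) * ε = η / 3 := by simp only [ε]; field_simp
  have hlarge : ∀ᶠ t : ℕ in atTop, 0 < t ∧ ∀ i, |c i| * ((L : ℝ) ^ 2 / (4 * t)) < η / 3 := by
    refine (eventually_gt_atTop 0).and (eventually_all.2 fun i => ?_)
    filter_upwards [(tendsto_const_div_atTop_nhds_zero_nat (|c i| * L ^ 2 / 4)).eventually
      (gt_mem_nhds (by positivity : (0 : ℝ) < η / 3))] with t ht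
    exact (le_of_eq (by ring)).trans_lt ht
  obtain ⟨t, hrec, ht, htail⟩ := ((frequently_norm_cube_lt_and_norm_lt (fun i => 8 * c i)
    (fun i => 3 * c i) (by positivity : 0 < ε)).and_eventually hlarge).exists
  refine ⟨4 * t ^ 2, fun j hj i => ?_⟩
  have hn : ((4 * t ^ 2 + j : ℕ) : ℝ) = 4 * (t : ℝ) ^ 2 + j := by norm_num
  have hlin : (j : ℝ) * ‖((3 * c i * t : ℝ) : UnitAddCircle)‖ ≤ L * ε :=
    mul_le_mul (by exact_mod_cast hj) (hrec i).2.le (norm_nonneg _) L.cast_nonneg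
  have hquad : |c i| * ((j : ℝ) ^ 2 / (4 * t)) < η / 3 :=
    lt_of_le_of_lt (by gcongr) (htail i)
  rw [hn]
  linarith [distNearestInt_mul_rpow_three_halves_le (c i) (Nat.cast_pos.2 ht) j, (hrec i).1]
end

section
/- Let α₁,…,α_k ∈ ℝ and δ > 0. Then there exists δ' with 0 < δ' ≤ δ such that the set E = {m ∈ ℕ : ‖α_i · m‖ < δ' for all 1 ≤ i ≤ k} has a natural density that exists and is positive. -/
open Filter

/-!
With `θ = (α i mod 1)ᵢ` on the torus `𝕋ᵏ` (sup norm), the set in question is the Bohr set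
`E_t = {m | ‖m • θ‖ < t}`. For every continuous `F` on `𝕋ᵏ` the Cesàro means of `F (m • θ)`
converge: for a character they are the means of a geometric sequence `z ^ m` with `‖z‖ = 1`, and
characters span a dense subspace of `C(𝕋ᵏ, ℂ)`. Squeezing a Urysohn function between the
indicators of `E_s` and `E_t` gives `limsup d_N(E_s) ≤ liminf d_N(E_t)` for `s < t`, so the upper
density of `E_t` is monotone in `t` and the density exists at each of its continuity points.
It is positive because, by compactness of `𝕋ᵏ`, Bohr sets have bounded gaps.
-/

open Finset Topology UnitAddTorus

noncomputable def cesaroMean {E : Type*} [AddCommGroup E] [Module ℝ E] (u : ℕ → E) (N : ℕ) : E :=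
  (N : ℝ)⁻¹ • ∑ m ∈ Icc 1 N, u m

section CesaroMean

variable {E : Type*} [NormedAddCommGroup E] [NormedSpace ℝ E]

lemma cesaroMean_add (u v : ℕ → E) (N : ℕ) :
    cesaroMean (fun m => u m + v m) N = cesaroMean u N + cesaroMean v N := by
  simp [cesaroMean, sum_add_distrib]

lemma cesaroMean_smul {𝕜 : Type*} [Semiring 𝕜] [Module 𝕜 E] [SMulCommClass ℝ 𝕜 E]
    (c : 𝕜) (u : ℕ → E) (N : ℕ) : cesaroMean (fun m => c • u m) N = c • cesaroMean u N := by
  simp only [cesaroMean, ← smul_sum]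
  exact smul_comm _ _ _

lemma norm_cesaroMean_sub_le {u v : ℕ → E} {C : ℝ} (hC : 0 ≤ C) (h : ∀ m, ‖u m - v m‖ ≤ C)
    (N : ℕ) : ‖cesaroMean u N - cesaroMean v N‖ ≤ C := by
  rcases N.eq_zero_or_pos with rfl | hN
  · simpa [cesaroMean] using hC
  have hsum : ‖∑ m ∈ Icc 1 N, (u m - v m)‖ ≤ N * C :=
    calc ‖∑ m ∈ Icc 1 N, (u m - v m)‖ ≤ ∑ m ∈ Icc 1 N, C :=
          (norm_sum_le _ _).trans (sum_le_sum fun m _ => h m)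
      _ = N * C := by simp
  rw [cesaroMean, cesaroMean, ← smul_sub, ← sum_sub_distrib, norm_smul, norm_inv,
    Real.norm_natCast, inv_mul_le_iff₀ (by exact_mod_cast hN)]
  exact hsum

lemma cesaroMean_mono {u v : ℕ → ℝ} (h : u ≤ v) (N : ℕ) : cesaroMean u N ≤ cesaroMean v N :=
  smul_le_smul_of_nonneg_left (sum_le_sum fun m _ => h m) (by positivity)

end CesaroMean

lemma norm_sum_Icc_pow_le {z : ℂ} (hz : ‖z‖ ≤ 1) (hz1 : z ≠ 1) (N : ℕ) :
    ‖∑ m ∈ Icc 1 N, z ^ m‖ ≤ 2 / ‖z - 1‖ := by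
  have hsum : ∑ m ∈ Icc 1 N, z ^ m = z * (z ^ N - 1) / (z - 1) := by
    rw [← Ico_add_one_right_eq_Icc, sum_Ico_eq_sum_range, mul_div_assoc, ← geom_sum_eq hz1,
      mul_sum]
    simp [pow_succ', add_comm]
  have hnum : ‖z * (z ^ N - 1)‖ ≤ 2 := by
    rw [norm_mul]
    calc ‖z‖ * ‖z ^ N - 1‖ ≤ 1 * (1 + 1) := by
          gcongr
          exact (norm_sub_le _ _).trans (by simpa using pow_le_one₀ (norm_nonneg z) hz)
      _ = 2 := by norm_num
  rw [hsum, norm_div]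
  gcongr

lemma cauchySeq_cesaroMean_pow {z : ℂ} (hz : ‖z‖ ≤ 1) : CauchySeq (cesaroMean (z ^ ·)) := by
  by_cases hz1 : z = 1
  · refine (tendsto_const_nhds (x := (1 : ℂ))).congr' ?_ |>.cauchySeq
    filter_upwards [eventually_gt_atTop 0] with N hN
    simp [cesaroMean, hz1, hN.ne']
  refine (squeeze_zero_norm (fun N => ?_)
    (tendsto_const_div_atTop_nhds_zero_nat (2 / ‖z - 1‖))).cauchySeq
  rw [cesaroMean, norm_smul, norm_inv, Real.norm_natCast, inv_mul_eq_div]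
  gcongr
  exact norm_sum_Icc_pow_le hz hz1 N

lemma countIn_div_eq_cesaroMean (E : Set ℕ) (N : ℕ) :
    (countIn E N : ℝ) / N = cesaroMean (E.indicator 1) N := by
  classical
  rw [countIn, card_filter]
  simp [cesaroMean, div_eq_inv_mul, Set.indicator_apply]

lemma countIn_mono (S : Set ℕ) : Monotone (countIn S) := fun _ _ h => by
  classical
  unfold countIn
  exact card_le_card (filter_subset_filter _ (Icc_subset_Icc_right h))

lemma countIn_le (S : Set ℕ) (N : ℕ) : countIn S N ≤ N := by
  classical
  exact (card_filter_le _ _).trans (by simp)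

lemma countIn_lt_countIn_add {S : Set ℕ} {N n L : ℕ} (hn : n ∈ S) (hNn : N < n) (hnL : n ≤ N + L) :
    countIn S N < countIn S (N + L) := by
  classical
  unfold countIn
  refine card_lt_card <| (ssubset_iff_of_subset (filter_subset_filter _
    (Icc_subset_Icc_right (Nat.le_add_right N L)))).2 ⟨n, ?_, ?_⟩ <;> simp [hn] <;> omega

lemma Syndetic.pos_of_tendsto {S : Set ℕ} (hS : Syndetic S) {l : ℝ}
    (hl : Tendsto (fun N => (countIn S N : ℝ) / N) atTop (𝓝 l)) : 0 < l := by
  obtain ⟨L, hL, hgap⟩ := hS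
  have hblock : ∀ j, j ≤ countIn S (j * L) := by
    intro j
    induction j with
    | zero => exact Nat.zero_le _
    | succ j ih =>
      obtain ⟨n, hn, h1, h2⟩ := hgap (j * L + 1)
      rw [Nat.succ_mul]
      exact ih.trans_lt (countIn_lt_countIn_add hn (by omega) (by omega))
  have hlow : ∀ N : ℕ, 0 < N → 1 / (L : ℝ) - 1 / N ≤ (countIn S N : ℝ) / N := by
    intro N hN
    have hNL : (N : ℝ) < (N / L : ℕ) * L + L := by exact_mod_cast Nat.lt_div_mul_add hL
    have hcount : ((N / L : ℕ) : ℝ) ≤ countIn S N := by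
      exact_mod_cast (hblock _).trans (countIn_mono S (Nat.div_mul_le_self N L))
    have hL' : (0 : ℝ) < L := by exact_mod_cast hL
    have hN' : (0 : ℝ) < N := by exact_mod_cast hN
    calc 1 / (L : ℝ) - 1 / N = ((N : ℝ) / L - 1) / N := by field_simp
      _ ≤ ((N / L : ℕ) : ℝ) / N := by
          gcongr
          rw [sub_le_iff_le_add, div_le_iff₀ hL']
          linarith
      _ ≤ (countIn S N : ℝ) / N := by gcongr
  have hlim : Tendsto (fun N : ℕ => 1 / (L : ℝ) - 1 / N) atTop (𝓝 (1 / L)) := by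
    simpa using tendsto_one_div_atTop_nhds_zero_nat.const_sub (1 / (L : ℝ))
  exact (by positivity : (0 : ℝ) < 1 / L).trans_le
    (le_of_tendsto_of_tendsto hlim hl (eventually_atTop.2 ⟨1, hlow⟩))

lemma limsup_le_liminf_of_le_of_le {u g v : ℕ → ℝ} {a b : ℝ} (hu : ∀ N, a ≤ u N)
    (hv : ∀ N, v N ≤ b) (hg : CauchySeq g) (hug : u ≤ g) (hgv : g ≤ v) :
    limsup u atTop ≤ liminf v atTop := by
  obtain ⟨L, hL⟩ := cauchySeq_tendsto_of_complete hg
  calc limsup u atTop ≤ limsup g atTop :=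
        limsup_le_limsup (.of_forall hug) (isCoboundedUnder_le_of_le atTop hu)
          hL.isBoundedUnder_le
    _ = liminf g atTop := hL.limsup_eq.trans hL.liminf_eq.symm
    _ ≤ liminf v atTop :=
        liminf_le_liminf (.of_forall hgv) hL.isBoundedUnder_ge
          (isCoboundedUnder_ge_of_le atTop hv)

theorem exists_mem_Ioo_tendsto_of_exists_cauchySeq_between {f : ℝ → ℕ → ℝ}
    (hf : ∀ t N, f t N ∈ Set.Icc (0 : ℝ) 1)
    (h : ∀ s t, s < t → ∃ g : ℕ → ℝ, CauchySeq g ∧ f s ≤ g ∧ g ≤ f t) {a b : ℝ} (hab : a < b) :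
    ∃ t ∈ Set.Ioo a b, ∃ l, Tendsto (f t) atTop (𝓝 l) := by
  have hbdd_le : ∀ t, IsBoundedUnder (· ≤ ·) atTop (f t) :=
    fun t => isBoundedUnder_of ⟨1, fun N => (hf t N).2⟩
  have hbdd_ge : ∀ t, IsBoundedUnder (· ≥ ·) atTop (f t) :=
    fun t => isBoundedUnder_of ⟨0, fun N => (hf t N).1⟩
  set D : ℝ → ℝ := fun t => limsup (f t) atTop
  have hkey : ∀ s t, s < t → D s ≤ liminf (f t) atTop := fun s t hst => by
    obtain ⟨g, hg, hsg, hgt⟩ := h s t hst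
    exact limsup_le_liminf_of_le_of_le (fun N => (hf s N).1) (fun N => (hf t N).2) hg hsg hgt
  have hmono : Monotone D := fun s t hst => by
    rcases hst.eq_or_lt with rfl | hst
    · rfl
    · exact (hkey s t hst).trans (liminf_le_limsup (hbdd_le t) (hbdd_ge t))
  obtain ⟨t, ht, hcont⟩ : ∃ t ∈ Set.Ioo a b, ContinuousAt D t := by
    by_contra! hdisc
    exact (Cardinal.Real.Ioo_countable_iff.1
      (hmono.countable_not_continuousAt.mono hdisc)).not_gt hab
  have hlimsup : D t ≤ liminf (f t) atTop :=
    le_of_tendsto (hcont.tendsto.mono_left nhdsWithin_le_nhds)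
      (eventually_nhdsWithin_of_forall (s := Set.Iio t) fun s hs => hkey s t hs)
  exact ⟨t, ht, D t, tendsto_of_liminf_eq_limsup
    (le_antisymm (liminf_le_limsup (hbdd_le t) (hbdd_ge t)) hlimsup) rfl (hbdd_le t) (hbdd_ge t)⟩

lemma cauchySeq_of_dense_of_lipschitzWith_one {X Y : Type*} [PseudoMetricSpace X]
    [PseudoMetricSpace Y] {A : ℕ → X → Y} (hA : ∀ n, LipschitzWith 1 (A n)) {D : Set X}
    (hD : Dense D) (h : ∀ y ∈ D, CauchySeq fun n => A n y) (x : X) :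
    CauchySeq fun n => A n x := by
  refine Metric.cauchySeq_iff'.2 fun ε hε => ?_
  obtain ⟨y, hyD, hxy⟩ := hD.exists_dist_lt x (by positivity : 0 < ε / 3)
  obtain ⟨N, hN⟩ := Metric.cauchySeq_iff'.1 (h y hyD) (ε / 3) (by positivity)
  refine ⟨N, fun n hn => ?_⟩
  have hn' := (hA n).dist_le_mul x y
  have hN' := (hA N).dist_le_mul y x
  simp only [NNReal.coe_one, one_mul] at hn' hN'
  calc dist (A n x) (A N x) ≤ dist (A n x) (A n y) + dist (A n y) (A N y) + dist (A N y) (A N x) :=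
        dist_triangle4 _ _ _ _
    _ < ε / 3 + ε / 3 + ε / 3 := by
        gcongr
        · exact hn'.trans_lt hxy
        · exact hN n hn
        · exact hN'.trans_lt (by rwa [dist_comm])
    _ = ε := by ring

lemma exists_forall_exists_le_dist_lt {X : Type*} [PseudoMetricSpace X] [CompactSpace X]
    (x : ℕ → X) {ε : ℝ} (hε : 0 < ε) : ∃ M, ∀ n, ∃ r ≤ M, dist (x n) (x r) < ε := by
  obtain ⟨S, -, hSfin, hS⟩ := Set.exists_subset_image_finite_and.1 <|
    Metric.finite_approx_of_totallyBounded (s := x '' Set.univ)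
      (isCompact_univ.totallyBounded.subset (Set.subset_univ _)) ε hε
  obtain ⟨M, hM⟩ := hSfin.bddAbove
  refine ⟨M, fun n => ?_⟩
  obtain ⟨r, hrS, hr⟩ := by simpa using hS (Set.mem_image_of_mem x (Set.mem_univ n))
  exact ⟨r, hM hrS, hr⟩

def bohrSet {G : Type*} [SeminormedAddCommGroup G] (θ : G) (r : ℝ) : Set ℕ :=
  {m | ‖m • θ‖ < r}

lemma syndetic_bohrSet {G : Type*} [SeminormedAddCommGroup G] [CompactSpace G] (θ : G) {r : ℝ}
    (hr : 0 < r) : Syndetic (bohrSet θ r) := by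
  obtain ⟨M, hM⟩ := exists_forall_exists_le_dist_lt (· • θ) hr
  refine ⟨M + 1, M.succ_pos, fun a => ?_⟩
  obtain ⟨j, hjM, hj⟩ := hM (a + M)
  refine ⟨a + M - j, ?_, by omega, by omega⟩
  rwa [bohrSet, Set.mem_ofPred_eq, sub_nsmul _ (by omega), ← sub_eq_add_neg, ← dist_eq_norm]

section Torus

variable {d : Type*} [Fintype d]

lemma mFourier_nsmul (n : d → ℤ) (x : UnitAddTorus d) (m : ℕ) :
    mFourier n (m • x) = mFourier n x ^ m := by
  simp only [mFourier, ContinuousMap.coe_mk, Pi.smul_apply, fourier_apply, ← prod_pow,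
    smul_comm (n _) m, AddCircle.toCircle_nsmul, Circle.coe_pow]

lemma cauchySeq_cesaroMean_comp_nsmul (F : C(UnitAddTorus d, ℂ)) (θ : UnitAddTorus d) :
    CauchySeq (cesaroMean fun m => F (m • θ)) := by
  have hLip : ∀ N, LipschitzWith 1
      fun G : C(UnitAddTorus d, ℂ) => cesaroMean (fun m => G (m • θ)) N :=
    fun N => LipschitzWith.of_dist_le_mul fun G H => by
      rw [NNReal.coe_one, one_mul, dist_eq_norm, dist_eq_norm]
      exact norm_cesaroMean_sub_le (norm_nonneg _) (fun m => (G - H).norm_coe_le_norm _) N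
  refine cauchySeq_of_dense_of_lipschitzWith_one hLip
    (Submodule.dense_iff_topologicalClosure_eq_top.2 span_mFourier_closure_eq_top)
    (fun G hG => ?_) F
  induction hG using Submodule.span_induction with
  | mem G hG =>
    obtain ⟨n, rfl⟩ := hG
    simp only [mFourier_nsmul]
    exact cauchySeq_cesaroMean_pow (((mFourier n).norm_coe_le_norm θ).trans mFourier_norm.le)
  | zero => simpa [cesaroMean] using cauchySeq_const (0 : ℂ)
  | add G H _ _ hG hH =>
    simp only [ContinuousMap.add_apply, cesaroMean_add]
    exact hG.add hH
  | smul c G _ hG =>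
    simp only [ContinuousMap.smul_apply, cesaroMean_smul]
    exact (uniformContinuous_const_smul c).comp_cauchySeq hG

lemma cauchySeq_cesaroMean_comp_nsmul_real (f : C(UnitAddTorus d, ℝ)) (θ : UnitAddTorus d) :
    CauchySeq (cesaroMean fun m => f (m • θ)) := by
  have h := Complex.reCLM.uniformContinuous.comp_cauchySeq
    (cauchySeq_cesaroMean_comp_nsmul (.comp ⟨((↑) : ℝ → ℂ), Complex.continuous_ofReal⟩ f) θ)
  convert h using 1
  funext N
  simp [cesaroMean, Complex.re_sum]

lemma exists_cauchySeq_between_countIn_div_bohrSet (θ : UnitAddTorus d) {s t : ℝ} (hst : s < t) :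
    ∃ g : ℕ → ℝ, CauchySeq g ∧ (fun N => (countIn (bohrSet θ s) N : ℝ) / N) ≤ g ∧
      g ≤ fun N => (countIn (bohrSet θ t) N : ℝ) / N := by
  obtain ⟨f, hf0, hf1, hf01⟩ := exists_continuous_zero_one_of_isClosed
    (isClosed_le continuous_const continuous_norm : IsClosed {x : UnitAddTorus d | t ≤ ‖x‖})
    (isClosed_le continuous_norm continuous_const : IsClosed {x : UnitAddTorus d | ‖x‖ ≤ s})
    (Set.disjoint_left.2 fun x (hx : t ≤ ‖x‖) (hx' : ‖x‖ ≤ s) => (hst.trans_le hx).not_ge hx')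
  refine ⟨cesaroMean fun m => f (m • θ), cauchySeq_cesaroMean_comp_nsmul_real f θ,
    fun N => ?_, fun N => ?_⟩ <;>
    simp only [countIn_div_eq_cesaroMean] <;> refine cesaroMean_mono (fun m => ?_) N
  · by_cases hm : m ∈ bohrSet θ s
    · simp [Set.indicator_of_mem hm, hf1 (show ‖m • θ‖ ≤ s from le_of_lt hm)]
    · simp [Set.indicator_of_notMem hm, (hf01 _).1]
  · by_cases hm : m ∈ bohrSet θ t
    · simp [Set.indicator_of_mem hm, (hf01 _).2]
    · simp [Set.indicator_of_notMem hm, hf0 (show t ≤ ‖m • θ‖ from not_lt.1 hm)]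

lemma setOf_forall_distNearestInt_lt_eq_bohrSet (α : d → ℝ) {r : ℝ} (hr : 0 < r) :
    {m : ℕ | ∀ i, distNearestInt (α i * m) < r} = bohrSet (fun i => (α i : UnitAddCircle)) r := by
  ext m
  simp only [bohrSet, Set.mem_ofPred_eq, pi_norm_lt_iff hr, Pi.smul_apply, ← AddCircle.coe_nsmul,
    nsmul_eq_mul, distNearestInt, UnitAddCircle.norm_eq, mul_comm]

end Torus

/-- A Bohr set with a slightly shrunk radius has a natural density that
exists and is positive. -/
theorem stmt_13 (k : ℕ) (α : Fin k → ℝ) (δ : ℝ) (hδ : 0 < δ) :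
    ∃ δ' : ℝ, 0 < δ' ∧ δ' ≤ δ ∧
      PosDensity {m : ℕ | ∀ i : Fin k, distNearestInt (α i * (m : ℝ)) < δ'} := by
  set θ : UnitAddTorus (Fin k) := fun i => (α i : UnitAddCircle)
  obtain ⟨t, ⟨ht0, htδ⟩, l, hl⟩ := exists_mem_Ioo_tendsto_of_exists_cauchySeq_between
    (f := fun t N => (countIn (bohrSet θ t) N : ℝ) / N)
    (fun t N => ⟨by positivity, div_le_one_of_le₀ (by exact_mod_cast countIn_le _ N) N.cast_nonneg⟩)
    (fun s t hst => exists_cauchySeq_between_countIn_div_bohrSet θ hst) hδ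
  refine ⟨t, ht0, htδ.le, l, (syndetic_bohrSet θ ht0).pos_of_tendsto hl, ?_⟩
  rwa [setOf_forall_distNearestInt_lt_eq_bohrSet α ht0]
end

section
/- Let λ ∈ ℝ be irrational, let δ > 0, and let β > 0 satisfy β < δ/(1 + |λ|). Define E = {m ∈ ℕ : ‖β·m‖ < δ and ‖λ·β·m‖ < δ}, f₁(t) = t^{3/2}, and f₂(t) = λ·t^{3/2} + t. Then R_{f₁}(E) ∩ R_{f₂}(E) ⊆ {n ∈ ℕ : ‖β·n‖ < 5δ}. -/
open Filter

/-!
Write `x = n^{3/2} = A + a` and `λx + n = B + b` with `A, B` integers and `a, b ∈ [0, 1)`.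
Then `βn = βB - λβA + β(b - λa)`, where the last term has size at most `β(1 + |λ|) < δ`.
If `n` is a return time of `E` along both `⌊f₁⌋` and `⌊f₂⌋`, then `A` and `B` are differences
of elements of `E`, so `‖βB‖ < 2δ` and `‖λβA‖ < 2δ`, and hence `‖βn‖ < 5δ`.
-/

lemma distNearestInt_le_abs_sub_intCast (x : ℝ) (k : ℤ) : distNearestInt x ≤ |x - k| :=
  round_le x k

lemma distNearestInt_sub_le (x y : ℝ) :
    distNearestInt (x - y) ≤ distNearestInt x + distNearestInt y := by
  refine (distNearestInt_le_abs_sub_intCast (x - y) (round x - round y)).trans ?_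
  push_cast
  calc |x - y - ((round x : ℝ) - round y)| = |(x - round x) - (y - round y)| := by ring_nf
    _ ≤ distNearestInt x + distNearestInt y := abs_sub _ _

lemma distNearestInt_add_le (x r : ℝ) : distNearestInt (x + r) ≤ distNearestInt x + |r| := by
  refine (distNearestInt_le_abs_sub_intCast (x + r) (round x)).trans ?_
  calc |x + r - round x| = |(x - round x) + r| := by ring_nf
    _ ≤ distNearestInt x + |r| := abs_add_le _ _

lemma distNearestInt_mul_lt_of_mem_retSet {u : ℕ → ℤ} {E : Set ℕ} {θ δ : ℝ}
    (hE : ∀ m ∈ E, distNearestInt (θ * m) < δ) {n : ℕ} (hn : n ∈ retSet u E) :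
    distNearestInt (θ * u n) < 2 * δ := by
  obtain ⟨m, m', hm, hm', hmm'⟩ := hn
  have hu : θ * u n = θ * m' - θ * m := by
    rw [show (u n : ℝ) = m' - m by rw [← Int.cast_natCast m', hmm']; push_cast; ring]
    ring
  rw [hu]
  linarith [distNearestInt_sub_le (θ * m') (θ * m), hE m hm, hE m' hm']

lemma distNearestInt_mul_le_of_floor (lam : ℝ) {β : ℝ} (hβ : 0 ≤ β) (x y : ℝ) :
    distNearestInt (β * y) ≤ distNearestInt (β * ⌊lam * x + y⌋) +
      distNearestInt (lam * β * ⌊x⌋) + β * (1 + |lam|) := by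
  set a := x - ⌊x⌋
  set b := lam * x + y - ⌊lam * x + y⌋
  have ha : |a| ≤ 1 := abs_le.mpr ⟨by linarith [Int.floor_le x], by linarith [Int.lt_floor_add_one x]⟩
  have hb : |b| ≤ 1 := abs_le.mpr
    ⟨by linarith [Int.floor_le (lam * x + y)], by linarith [Int.lt_floor_add_one (lam * x + y)]⟩
  have hsplit : β * y = (β * ⌊lam * x + y⌋ - lam * β * ⌊x⌋) + β * (b - lam * a) := by
    simp only [a, b]; ring
  have herr : |β * (b - lam * a)| ≤ β * (1 + |lam|) := by
    rw [abs_mul, abs_of_nonneg hβ]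
    refine mul_le_mul_of_nonneg_left ?_ hβ
    calc |b - lam * a| ≤ |b| + |lam| * |a| := by rw [← abs_mul]; exact abs_sub _ _
      _ ≤ 1 + |lam| * 1 := by gcongr
      _ = 1 + |lam| := by ring
  rw [hsplit]
  linarith [distNearestInt_add_le (β * ⌊lam * x + y⌋ - lam * β * ⌊x⌋) (β * (b - lam * a)),
    distNearestInt_sub_le (β * ⌊lam * x + y⌋) (lam * β * ⌊x⌋)]

theorem stmt_16_general (lam : ℝ) (δ β : ℝ)
    (hβ0 : 0 < β) (hβ : β < δ / (1 + |lam|))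
    (E : Set ℕ)
    (hE : E = {m : ℕ | distNearestInt (β * (m : ℝ)) < δ ∧
      distNearestInt (lam * β * (m : ℝ)) < δ}) :
    retSetFloor (fun t => t ^ ((3 : ℝ) / 2)) E ∩
        retSetFloor (fun t => lam * t ^ ((3 : ℝ) / 2) + t) E
      ⊆ {n : ℕ | distNearestInt (β * (n : ℝ)) < 5 * δ} := by
  subst hE
  rintro n ⟨hn₁, hn₂⟩
  have hA := distNearestInt_mul_lt_of_mem_retSet (fun m hm => hm.2) hn₁
  have hB := distNearestInt_mul_lt_of_mem_retSet (fun m hm => hm.1) hn₂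
  have hβδ : β * (1 + |lam|) < δ := (lt_div_iff₀ (by positivity)).mp hβ
  have := distNearestInt_mul_le_of_floor lam hβ0.le ((n : ℝ) ^ ((3 : ℝ) / 2)) n
  show distNearestInt (β * n) < 5 * δ
  linarith

/-- The non-thickness inclusion in the proof of Theorem 1.4(ii):
R_{f₁}(E) ∩ R_{f₂}(E) ⊆ {n : ‖β n‖ < 5δ}. -/
theorem stmt_16 (lam : ℝ) (hlam : Irrational lam) (δ β : ℝ) (hδ : 0 < δ)
    (hβ0 : 0 < β) (hβ : β < δ / (1 + |lam|))
    (E : Set ℕ)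
    (hE : E = {m : ℕ | distNearestInt (β * (m : ℝ)) < δ ∧
      distNearestInt (lam * β * (m : ℝ)) < δ}) :
    retSetFloor (fun t => t ^ ((3 : ℝ) / 2)) E ∩
        retSetFloor (fun t => lam * t ^ ((3 : ℝ) / 2) + t) E
      ⊆ {n : ℕ | distNearestInt (β * (n : ℝ)) < 5 * δ} :=
  stmt_16_general lam δ β hβ0 hβ E hE
end
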